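/- arXiv:2302.13586 — 3 statements merged into one kernel-verified Lean document; each statement's English description precedes it below -/
import Mathlib

section
/- For any ε ∈ (0, π) and all t > s, the spectral measure of f − f* satisfies σ_{f−f*}((−2ε/(t−s), 2ε/(t−s)]) ≤ (ε²/sin²ε) ‖P_{t,s}f − f*‖². -/
/-!
On the window `|x| ≤ 2ε/τ` the kernel `F_τ(x) = (sin (τx/2) / (τx/2))²` is at least
`(sin ε / ε)²`, because `sin x / x` is even and decreasing on `(0, π]` (concavity of `sin`).
At `x = 0` the formula gives the junk value `0`, but `{0}` is `μ`-null, so up to a null set the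
window lies in the superlevel set `{F_τ ≥ (sin ε / ε)²}`, and Markov's inequality bounds its
measure by `(ε / sin ε)² ∫ F_τ dμ`.
-/

open MeasureTheory Real Set intervalIntegral

/-- The Fejér-type kernel `F_τ(x) = (sin(τx/2)/(τx/2))²`. -/
noncomputable def Fker (τ x : ℝ) : ℝ := (Real.sin (τ * x / 2) / (τ * x / 2)) ^ 2

lemma antitoneOn_sin_div : AntitoneOn (fun x => sin x / x) (Ioc 0 π) := by
  have h := strictConcaveOn_sin_Icc.concaveOn.slope_anti (left_mem_Icc.mpr pi_pos.le)
  intro a ha b hb hab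
  have hmem : ∀ {y}, y ∈ Ioc 0 π → y ∈ Icc 0 π \ {0} := fun hy =>
    ⟨Ioc_subset_Icc_self hy, hy.1.ne'⟩
  simpa [slope_def_field, div_eq_inv_mul] using h (hmem ha) (hmem hb) hab

lemma Fker_nonneg (τ x : ℝ) : 0 ≤ Fker τ x := sq_nonneg _

lemma Fker_le_one (τ x : ℝ) : Fker τ x ≤ 1 := by
  rw [Fker, div_pow]
  exact div_le_one_of_le₀ (sq_le_sq.mpr abs_sin_le_abs) (sq_nonneg _)

lemma measurable_Fker (τ : ℝ) : Measurable (Fker τ) := by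
  unfold Fker
  fun_prop

lemma integrable_Fker (μ : Measure ℝ) [IsFiniteMeasure μ] (τ : ℝ) : Integrable (Fker τ) μ :=
  .of_bound (measurable_Fker τ).aestronglyMeasurable 1 <| .of_forall fun x => by
    rw [norm_of_nonneg (Fker_nonneg τ x)]
    exact Fker_le_one τ x

lemma sin_sq_div_sq_le_Fker {ε τ x : ℝ} (hεπ : ε ≤ π) (hτx : τ * x ≠ 0)
    (hx : |τ * x / 2| ≤ ε) : sin ε ^ 2 / ε ^ 2 ≤ Fker τ x := by
  set u := τ * x / 2
  have hu : 0 < |u| := abs_pos.mpr (div_ne_zero hτx two_ne_zero)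
  have hε : 0 < ε := hu.trans_le hx
  have hFker : Fker τ x = (sin |u| / |u|) ^ 2 := by
    rcases abs_choice u with h | h <;> simp only [Fker, h, sin_neg, neg_div_neg_eq, u]
  rw [hFker, ← div_pow]
  exact pow_le_pow_left₀ (div_nonneg (sin_nonneg_of_nonneg_of_le_pi hε.le hεπ) hε.le)
    (antitoneOn_sin_div ⟨hu, hx.trans hεπ⟩ ⟨hε, hεπ⟩ hx) 2

lemma sin_sq_div_sq_mul_measureReal_Ioc_le_integral_Fker (μ : Measure ℝ) [IsFiniteMeasure μ]
    (hμ0 : μ {0} = 0) {ε τ : ℝ} (hεπ : ε ≤ π) (hτ : 0 < τ) :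
    sin ε ^ 2 / ε ^ 2 * μ.real (Ioc (-(2 * ε / τ)) (2 * ε / τ)) ≤ ∫ x, Fker τ x ∂μ := by
  set c := sin ε ^ 2 / ε ^ 2
  have hwindow : Ioc (-(2 * ε / τ)) (2 * ε / τ) \ {0} ⊆ {x | c ≤ Fker τ x} := by
    rintro x ⟨hx, hx0 : x ≠ 0⟩
    refine sin_sq_div_sq_le_Fker hεπ (mul_ne_zero hτ.ne' hx0) ?_
    have hxabs : |x| ≤ 2 * ε / τ := abs_le.mpr ⟨hx.1.le, hx.2⟩
    rw [abs_div, abs_mul, abs_of_pos hτ, abs_two]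
    rw [le_div_iff₀ hτ] at hxabs
    linarith
  calc c * μ.real (Ioc (-(2 * ε / τ)) (2 * ε / τ))
      = c * μ.real (Ioc (-(2 * ε / τ)) (2 * ε / τ) \ {0}) := by
        rw [measureReal_def, measureReal_def, measure_sdiff_null hμ0]
    _ ≤ c * μ.real {x | c ≤ Fker τ x} :=
        mul_le_mul_of_nonneg_left (measureReal_mono hwindow) (by positivity)
    _ ≤ ∫ x, Fker τ x ∂μ :=
        mul_meas_ge_le_integral_of_nonneg (.of_forall (Fker_nonneg τ)) (integrable_Fker μ τ) c

theorem stmt1_general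
    {H : Type*} [NormedAddCommGroup H] [InnerProductSpace ℂ H]
    (U : ℝ → H →L[ℂ] H)
    (f fstar : H)
    (μ : Measure ℝ) [IsFiniteMeasure μ] (hμ0 : μ {0} = 0)
    (hrep : ∀ s t : ℝ, s < t →
      ‖(t - s)⁻¹ • (∫ τ in s..t, U τ f) - fstar‖ ^ 2 = ∫ x, Fker (t - s) x ∂μ)
    (ε : ℝ) (hε : ε ∈ Set.Ioo 0 Real.pi) (s t : ℝ) (hts : s < t) :
    (μ (Set.Ioc (-(2 * ε / (t - s))) (2 * ε / (t - s)))).toReal ≤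
      ε ^ 2 / Real.sin ε ^ 2 * ‖(t - s)⁻¹ • (∫ τ in s..t, U τ f) - fstar‖ ^ 2 := by
  obtain ⟨hε0, hεπ⟩ := hε
  have hsin : 0 < sin ε := sin_pos_of_pos_of_lt_pi hε0 hεπ
  have hmarkov := sin_sq_div_sq_mul_measureReal_Ioc_le_integral_Fker μ hμ0 hεπ.le
    (sub_pos.mpr hts)
  rw [hrep s t hts, ← measureReal_def]
  calc μ.real (Ioc (-(2 * ε / (t - s))) (2 * ε / (t - s)))
      = ε ^ 2 / sin ε ^ 2 *
          (sin ε ^ 2 / ε ^ 2 * μ.real (Ioc (-(2 * ε / (t - s))) (2 * ε / (t - s)))) := by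
        field_simp
    _ ≤ ε ^ 2 / sin ε ^ 2 * ∫ x, Fker (t - s) x ∂μ := by gcongr

theorem stmt1
    {H : Type*} [NormedAddCommGroup H] [InnerProductSpace ℂ H] [CompleteSpace H]
    (U : ℝ → H →L[ℂ] H)
    (hUgrp : ∀ a b : ℝ, U (a + b) = (U a).comp (U b))
    (hUiso : ∀ (τ : ℝ) (g : H), ‖U τ g‖ = ‖g‖)
    (f fstar : H)
    (hcont : Continuous fun τ : ℝ => U τ f)
    (hfix : ∀ τ : ℝ, U τ fstar = fstar)
    (horth : ∀ g : H, (∀ τ : ℝ, U τ g = g) → (inner ℂ (f - fstar) g : ℂ) = 0)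
    (μ : Measure ℝ) [IsFiniteMeasure μ] (hμ0 : μ {0} = 0)
    (hrep : ∀ s t : ℝ, s < t →
      ‖(t - s)⁻¹ • (∫ τ in s..t, U τ f) - fstar‖ ^ 2 = ∫ x, Fker (t - s) x ∂μ)
    (ε : ℝ) (hε : ε ∈ Set.Ioo 0 Real.pi) (s t : ℝ) (hts : s < t) :
    (μ (Set.Ioc (-(2 * ε / (t - s))) (2 * ε / (t - s)))).toReal ≤
      ε ^ 2 / Real.sin ε ^ 2 * ‖(t - s)⁻¹ • (∫ τ in s..t, U τ f) - fstar‖ ^ 2 :=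
  stmt1_general U f fstar μ hμ0 hrep ε hε s t hts
end

section
/- Let μ be a finite Borel measure on ℝ such that ∫_{ℝ∖{0}} sin²(τx)/x² dμ(x) ≤ B for all τ > 0. Then ∫_{ℝ∖{0}} x^{−2} dμ(x) ≤ 2B. Consequently, the class of finite measures with ∫ sin²(τx)/(τx)² dμ = O(τ^{−2}) coincides with the class of finite measures with ∫_{ℝ∖{0}} x^{−2} dμ < ∞. -/
/-!
Averaging the hypothesis over `τ ∈ (0, T)` and applying Tonelli gives
`∫ x⁻² · (T⁻¹ ∫₀ᵀ sin²(τx) dτ) dμ(x) ≤ B`. The inner mean is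
`1/2 - sin(Tx) cos(Tx) / (2Tx) → 1/2` for `x ≠ 0`, so Fatou's lemma as `T → ∞` yields
`∫ x⁻²/2 dμ ≤ B`. Multiplied by `τ²`, an `O(τ⁻²)` bound on `∫ sin²(τx)/(τx)² dν` is such a
uniform bound; conversely `sin² ≤ 1` gives the `O(τ⁻²)` bound when `∫ x⁻² dν < ∞`.
-/

open MeasureTheory Real Filter Topology Set
open scoped ENNReal

lemma integral_sin_mul_sq (x T : ℝ) (hx : x ≠ 0) :
    ∫ τ in (0 : ℝ)..T, sin (τ * x) ^ 2 = T / 2 - sin (T * x) * cos (T * x) / (2 * x) := by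
  rw [intervalIntegral.integral_comp_mul_right (fun t => sin t ^ 2) hx, integral_sin_sq]
  simp only [zero_mul, sin_zero, cos_zero, mul_one, zero_sub, sub_zero, smul_eq_mul]
  field_simp
  ring

lemma tendsto_inv_mul_integral_sin_mul_sq (x : ℝ) (hx : x ≠ 0) :
    Tendsto (fun T => T⁻¹ * ∫ τ in (0 : ℝ)..T, sin (τ * x) ^ 2) atTop (𝓝 (1 / 2)) := by
  have hbdd : IsBoundedUnder (· ≤ ·) atTop
      ((‖·‖) ∘ fun T => sin (T * x) * cos (T * x) / (2 * x)) := by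
    refine isBoundedUnder_of ⟨|2 * x|⁻¹, fun T => ?_⟩
    rw [Function.comp_apply, Real.norm_eq_abs, abs_div, abs_mul, ← one_div]
    gcongr
    exact mul_le_one₀ (abs_sin_le_one _) (abs_nonneg _) (abs_cos_le_one _)
  have hlim := (tendsto_inv_atTop_zero.zero_mul_isBoundedUnder_le hbdd).const_sub (1 / 2)
  rw [sub_zero] at hlim
  refine hlim.congr' ((eventually_gt_atTop 0).mono fun T hT => ?_)
  dsimp only
  rw [integral_sin_mul_sq x T hx]
  field_simp

lemma tendsto_average_sin_mul_sq_div_sq (x : ℝ) :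
    Tendsto (fun T => ENNReal.ofReal T⁻¹ *
        ∫⁻ τ in Ioc 0 T, ENNReal.ofReal (sin (τ * x) ^ 2 / x ^ 2))
      atTop (𝓝 (ENNReal.ofReal ((x ^ 2)⁻¹ / 2))) := by
  rcases eq_or_ne x 0 with rfl | hx
  · simp -- both sides vanish, as `(0 : ℝ)⁻¹ = 0`
  have hlim := ENNReal.tendsto_ofReal
    ((tendsto_inv_mul_integral_sin_mul_sq x hx).div_const (x ^ 2))
  rw [show (x ^ 2)⁻¹ / 2 = 1 / 2 / x ^ 2 by ring]
  refine hlim.congr' ((eventually_gt_atTop 0).mono fun T hT => ?_)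
  dsimp only
  rw [← ofReal_integral_eq_lintegral_ofReal, ← intervalIntegral.integral_of_le hT.le,
    intervalIntegral.integral_div, ← ENNReal.ofReal_mul (inv_nonneg.2 hT.le), mul_div_assoc]
  · exact Continuous.integrableOn_Ioc (by fun_prop)
  · exact Eventually.of_forall fun τ => by positivity

lemma lintegral_setLIntegral_Ioc_le {α : Type*} [MeasurableSpace α] {μ : Measure α} [SFinite μ]
    {f : ℝ → α → ℝ≥0∞} (hf : Measurable (Function.uncurry f)) {B : ℝ≥0∞}
    (h : ∀ τ > 0, ∫⁻ x, f τ x ∂μ ≤ B) (T : ℝ) :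
    ∫⁻ x, (∫⁻ τ in Ioc 0 T, f τ x) ∂μ ≤ ENNReal.ofReal T * B :=
  calc ∫⁻ x, (∫⁻ τ in Ioc 0 T, f τ x) ∂μ = ∫⁻ τ in Ioc 0 T, ∫⁻ x, f τ x ∂μ :=
        lintegral_lintegral_swap (f := fun x τ => f τ x) (hf.comp measurable_swap).aemeasurable
    _ ≤ ∫⁻ _ in Ioc 0 T, B := setLIntegral_mono' measurableSet_Ioc fun τ hτ => h τ hτ.1
    _ = ENNReal.ofReal T * B := by rw [setLIntegral_const, volume_Ioc, sub_zero, mul_comm]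

theorem lintegral_inv_sq_le_of_lintegral_sin_mul_sq_div_sq_le {ν : Measure ℝ} [SFinite ν]
    {B : ℝ≥0∞} (h : ∀ τ > 0, ∫⁻ x, ENNReal.ofReal (sin (τ * x) ^ 2 / x ^ 2) ∂ν ≤ B) :
    ∫⁻ x, ENNReal.ofReal (x ^ 2)⁻¹ ∂ν ≤ 2 * B := by
  set average : ℝ → ℝ → ℝ≥0∞ := fun T x =>
    ENNReal.ofReal T⁻¹ * ∫⁻ τ in Ioc 0 T, ENNReal.ofReal (sin (τ * x) ^ 2 / x ^ 2)
    with h_average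
  have hf : Measurable
      (Function.uncurry fun τ x : ℝ => ENNReal.ofReal (sin (τ * x) ^ 2 / x ^ 2)) := by
    fun_prop
  have hbound : ∀ᶠ T in atTop, ∫⁻ x, average T x ∂ν ≤ B := by
    filter_upwards [eventually_gt_atTop 0] with T hT
    calc ∫⁻ x, average T x ∂ν ≤ ENNReal.ofReal T⁻¹ * (ENNReal.ofReal T * B) := by
          rw [h_average, lintegral_const_mul' _ _ ENNReal.ofReal_ne_top]
          gcongr
          exact lintegral_setLIntegral_Ioc_le hf h T
      _ = B := by
          rw [← mul_assoc, ← ENNReal.ofReal_mul (inv_nonneg.2 hT.le), inv_mul_cancel₀ hT.ne',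
            ENNReal.ofReal_one, one_mul]
  have hhalf : ∫⁻ x, ENNReal.ofReal ((x ^ 2)⁻¹ / 2) ∂ν ≤ B :=
    calc ∫⁻ x, ENNReal.ofReal ((x ^ 2)⁻¹ / 2) ∂ν = ∫⁻ x, liminf (average · x) atTop ∂ν :=
          lintegral_congr fun x => (tendsto_average_sin_mul_sq_div_sq x).liminf_eq.symm
      _ ≤ liminf (fun T => ∫⁻ x, average T x ∂ν) atTop :=
          lintegral_liminf_le fun T => hf.lintegral_prod_left.const_mul _
      _ ≤ B := liminf_le_of_frequently_le hbound.frequently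
  calc ∫⁻ x, ENNReal.ofReal (x ^ 2)⁻¹ ∂ν = 2 * ∫⁻ x, ENNReal.ofReal ((x ^ 2)⁻¹ / 2) ∂ν := by
        rw [← lintegral_const_mul' _ _ ENNReal.ofNat_ne_top]
        congr with x
        rw [← ENNReal.ofReal_ofNat 2, ← ENNReal.ofReal_mul zero_le_two,
          mul_div_cancel₀ _ two_ne_zero]
    _ ≤ 2 * B := by gcongr

lemma lintegral_sin_mul_sq_div_sq_eq (ν : Measure ℝ) {τ : ℝ} (hτ : τ ≠ 0) :
    ∫⁻ x, ENNReal.ofReal (sin (τ * x) ^ 2 / x ^ 2) ∂ν =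
      ENNReal.ofReal (τ ^ 2) * ∫⁻ x, ENNReal.ofReal (sin (τ * x) ^ 2 / (τ * x) ^ 2) ∂ν := by
  rw [← lintegral_const_mul' _ _ ENNReal.ofReal_ne_top]
  congr with x
  rw [← ENNReal.ofReal_mul (sq_nonneg τ)]
  rcases eq_or_ne x 0 with rfl | hx
  · simp
  · field_simp

lemma lintegral_sin_mul_sq_div_mul_sq_le (ν : Measure ℝ) (τ : ℝ) :
    ∫⁻ x, ENNReal.ofReal (sin (τ * x) ^ 2 / (τ * x) ^ 2) ∂ν ≤
      ENNReal.ofReal (τ ^ 2)⁻¹ * ∫⁻ x, ENNReal.ofReal (x ^ 2)⁻¹ ∂ν := by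
  rw [← lintegral_const_mul' _ _ ENNReal.ofReal_ne_top]
  refine lintegral_mono fun x => ?_
  rw [← ENNReal.ofReal_mul (inv_nonneg.2 (sq_nonneg τ)), ← mul_inv, ← mul_pow, ← one_div]
  exact ENNReal.ofReal_le_ofReal (div_le_div_of_nonneg_right (sin_sq_le_one _) (sq_nonneg _))

theorem exists_lintegral_sin_mul_sq_div_mul_sq_le_iff {ν : Measure ℝ} [SFinite ν] :
    (∃ C > 0, ∀ τ : ℝ, 0 < τ →
        ∫⁻ x, ENNReal.ofReal (sin (τ * x) ^ 2 / (τ * x) ^ 2) ∂ν ≤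
          ENNReal.ofReal (C * (τ ^ 2)⁻¹)) ↔
      ∫⁻ x, ENNReal.ofReal (x ^ 2)⁻¹ ∂ν ≠ ⊤ := by
  constructor
  · rintro ⟨C, -, hC⟩
    have hbound (τ : ℝ) (hτ : 0 < τ) :
        ∫⁻ x, ENNReal.ofReal (sin (τ * x) ^ 2 / x ^ 2) ∂ν ≤ ENNReal.ofReal C := by
      rw [lintegral_sin_mul_sq_div_sq_eq ν hτ.ne']
      calc ENNReal.ofReal (τ ^ 2) * _
          ≤ ENNReal.ofReal (τ ^ 2) * ENNReal.ofReal (C * (τ ^ 2)⁻¹) := by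
            gcongr
            exact hC τ hτ
        _ = ENNReal.ofReal C := by
            rw [← ENNReal.ofReal_mul (sq_nonneg τ), mul_left_comm,
              mul_inv_cancel₀ (pow_ne_zero 2 hτ.ne'), mul_one]
    exact ne_top_of_le_ne_top (by finiteness)
      (lintegral_inv_sq_le_of_lintegral_sin_mul_sq_div_sq_le hbound)
  · intro hfin
    set I := ∫⁻ x, ENNReal.ofReal (x ^ 2)⁻¹ ∂ν
    refine ⟨I.toReal + 1, by positivity, fun τ _ => ?_⟩
    calc _ ≤ ENNReal.ofReal (τ ^ 2)⁻¹ * I := lintegral_sin_mul_sq_div_mul_sq_le ν τ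
      _ ≤ ENNReal.ofReal (τ ^ 2)⁻¹ * ENNReal.ofReal (I.toReal + 1) := by
          gcongr
          exact (ENNReal.le_ofReal_iff_toReal_le hfin (by positivity)).2 (by linarith)
      _ = ENNReal.ofReal ((I.toReal + 1) * (τ ^ 2)⁻¹) := by
          rw [← ENNReal.ofReal_mul (inv_nonneg.2 (sq_nonneg τ)), mul_comm]

theorem stmt16_general (B : ℝ) (μ : Measure ℝ) [IsFiniteMeasure μ]
    (h : ∀ τ : ℝ, 0 < τ →
      ∫⁻ x in ({0}ᶜ : Set ℝ), ENNReal.ofReal (Real.sin (τ * x) ^ 2 / x ^ 2) ∂μ ≤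
        ENNReal.ofReal B) :
    (∫⁻ x in ({0}ᶜ : Set ℝ), ENNReal.ofReal (x ^ (-2 : ℝ)) ∂μ ≤ ENNReal.ofReal (2 * B)) ∧
    -- consequently, the class of finite measures with
    -- `∫ sin²(τx)/(τx)² dν = O(τ⁻²)` coincides with the class of finite measures
    -- with `∫_{ℝ∖{0}} x⁻² dν < ∞`
    (∀ ν : Measure ℝ, IsFiniteMeasure ν →
      ((∃ C > 0, ∀ τ : ℝ, 0 < τ →
          ∫⁻ x in ({0}ᶜ : Set ℝ), ENNReal.ofReal (Real.sin (τ * x) ^ 2 / (τ * x) ^ 2) ∂ν ≤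
            ENNReal.ofReal (C * τ ^ (-2 : ℝ))) ↔
        ∫⁻ x in ({0}ᶜ : Set ℝ), ENNReal.ofReal (x ^ (-2 : ℝ)) ∂ν ≠ ⊤)) := by
  have rpow_neg_two (x : ℝ) : x ^ (-2 : ℝ) = (x ^ 2)⁻¹ := by simp [rpow_neg_ofNat]
  simp_rw [rpow_neg_two]
  refine ⟨?_, fun ν _ => exists_lintegral_sin_mul_sq_div_mul_sq_le_iff⟩
  calc _ ≤ 2 * ENNReal.ofReal B := lintegral_inv_sq_le_of_lintegral_sin_mul_sq_div_sq_le h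
    _ = ENNReal.ofReal (2 * B) := by rw [ENNReal.ofReal_mul zero_le_two, ENNReal.ofReal_ofNat]

theorem stmt16 (B : ℝ) (hB : 0 < B) (μ : Measure ℝ) [IsFiniteMeasure μ]
    (h : ∀ τ : ℝ, 0 < τ →
      ∫⁻ x in ({0}ᶜ : Set ℝ), ENNReal.ofReal (Real.sin (τ * x) ^ 2 / x ^ 2) ∂μ ≤
        ENNReal.ofReal B) :
    (∫⁻ x in ({0}ᶜ : Set ℝ), ENNReal.ofReal (x ^ (-2 : ℝ)) ∂μ ≤ ENNReal.ofReal (2 * B)) ∧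
    -- consequently, the class of finite measures with
    -- `∫ sin²(τx)/(τx)² dν = O(τ⁻²)` coincides with the class of finite measures
    -- with `∫_{ℝ∖{0}} x⁻² dν < ∞`
    (∀ ν : Measure ℝ, IsFiniteMeasure ν →
      ((∃ C > 0, ∀ τ : ℝ, 0 < τ →
          ∫⁻ x in ({0}ᶜ : Set ℝ), ENNReal.ofReal (Real.sin (τ * x) ^ 2 / (τ * x) ^ 2) ∂ν ≤
            ENNReal.ofReal (C * τ ^ (-2 : ℝ))) ↔
        ∫⁻ x in ({0}ᶜ : Set ℝ), ENNReal.ofReal (x ^ (-2 : ℝ)) ∂ν ≠ ⊤)) :=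
  stmt16_general B μ h
end

section
/- Let μ be a finite Borel measure on ℝ such that ∫_{ℝ∖{0}} sin²(τx)/x² dμ(x) → 0 as τ → +∞. Then μ(ℝ ∖ {0}) = 0. -/
open MeasureTheory Filter

/-- If sin² along a sequence tends to 0 and also for the shifted sequence, then sin c = 0. -/
lemma aux_sin_eq_zero (c : ℝ) (u : ℕ → ℝ)
    (h1 : Tendsto (fun n => Real.sin (u n) ^ 2) atTop (nhds 0))
    (h2 : Tendsto (fun n => Real.sin (u n + c) ^ 2) atTop (nhds 0)) :
    Real.sin c = 0 := by
  -- sin(u n) → 0 and sin(u n + c) → 0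
  have habs : ∀ (v : ℕ → ℝ), Tendsto (fun n => Real.sin (v n) ^ 2) atTop (nhds 0) →
      Tendsto (fun n => Real.sin (v n)) atTop (nhds 0) := by
    intro v hv
    have hs := (Real.continuous_sqrt.tendsto' 0 0 (by simp)).comp hv
    have heq : (fun n => Real.sqrt (Real.sin (v n) ^ 2)) = fun n => |Real.sin (v n)| := by
      funext n; rw [Real.sqrt_sq_eq_abs]
    rw [Function.comp_def, heq] at hs
    exact tendsto_zero_iff_abs_tendsto_zero _ |>.mpr hs
  have hs1 : Tendsto (fun n => Real.sin (u n)) atTop (nhds 0) := habs _ h1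
  have hs2 : Tendsto (fun n => Real.sin (u n + c)) atTop (nhds 0) := habs _ h2
  -- (cos (u n))^2 * sin c ^ 2 = (sin (u n + c) - sin (u n) * cos c)^2
  have key : ∀ n, (1 - Real.sin (u n) ^ 2) * Real.sin c ^ 2
      = (Real.sin (u n + c) - Real.sin (u n) * Real.cos c) ^ 2 := by
    intro n
    rw [← Real.cos_sq', ← mul_pow]
    congr 1
    rw [Real.sin_add]; ring
  have lim1 : Tendsto (fun n => (1 - Real.sin (u n) ^ 2) * Real.sin c ^ 2) atTop
      (nhds (Real.sin c ^ 2)) := by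
    have hc : Tendsto (fun n => (1 : ℝ) - Real.sin (u n) ^ 2) atTop (nhds 1) := by
      simpa using (tendsto_const_nhds (x := (1 : ℝ)) (f := atTop)).sub h1
    simpa using hc.mul_const (Real.sin c ^ 2)
  have lim2 : Tendsto (fun n => (Real.sin (u n + c) - Real.sin (u n) * Real.cos c) ^ 2) atTop
      (nhds 0) := by
    have := ((hs2.sub (hs1.mul_const (Real.cos c))).pow 2)
    simpa using this
  have : Real.sin c ^ 2 = 0 := by
    refine tendsto_nhds_unique ?_ lim2
    simpa only [key] using lim1
  exact pow_eq_zero_iff (by norm_num) |>.mp this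

/-- From summable lintegral bounds, a.e. tendsto zero. -/
lemma aux_ae_tendsto {ν : Measure ℝ} (f : ℕ → ℝ → ENNReal)
    (hm : ∀ n, AEMeasurable (f n) ν)
    (hb : ∀ n, ∫⁻ x, f n x ∂ν ≤ 2⁻¹ ^ n) :
    ∀ᵐ x ∂ν, Tendsto (fun n => f n x) atTop (nhds 0) := by
  have htsum : ∫⁻ x, ∑' n, f n x ∂ν ≠ ⊤ := by
    rw [lintegral_tsum hm]
    refine ne_top_of_le_ne_top ?_ (ENNReal.tsum_le_tsum hb)
    rw [ENNReal.tsum_geometric, ENNReal.one_sub_inv_two, inv_inv]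
    exact ENNReal.ofNat_ne_top
  have := ae_lt_top' (AEMeasurable.ennreal_tsum hm) htsum
  filter_upwards [this] with x hx
  exact ENNReal.tendsto_atTop_zero_of_tsum_ne_top hx.ne

theorem stmt17 (μ : Measure ℝ) [IsFiniteMeasure μ]
    (h : Tendsto
      (fun τ : ℝ => ∫⁻ x in ({0}ᶜ : Set ℝ), ENNReal.ofReal (Real.sin (τ * x) ^ 2 / x ^ 2) ∂μ)
      atTop (nhds 0)) :
    μ ({0}ᶜ : Set ℝ) = 0 := by
  set ν := μ.restrict ({0}ᶜ : Set ℝ) with hν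
  set I : ℝ → ENNReal :=
    fun τ => ∫⁻ x, ENNReal.ofReal (Real.sin (τ * x) ^ 2 / x ^ 2) ∂ν with hI
  -- choose τ n with I small at τ n, τ n + 1, τ n + √2
  have hsel : ∀ n : ℕ, ∃ T : ℝ, I T < 2⁻¹ ^ n ∧ I (T + 1) < 2⁻¹ ^ n ∧ I (T + Real.sqrt 2) < 2⁻¹ ^ n := by
    intro n
    have hpos : (0 : ENNReal) < 2⁻¹ ^ n := by
      apply ENNReal.pow_pos; simp
    have hev := h.eventually_lt_const hpos
    rw [eventually_atTop] at hev
    obtain ⟨T, hT⟩ := hev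
    exact ⟨T, hT T le_rfl, hT (T + 1) (by linarith),
      hT (T + Real.sqrt 2) (by have := Real.sqrt_nonneg 2; linarith)⟩
  choose τ hτ0 hτ1 hτ2 using hsel
  have hmeas : ∀ (s : ℝ), AEMeasurable
      (fun x => ENNReal.ofReal (Real.sin (s * x) ^ 2 / x ^ 2)) ν := by
    intro s
    apply Measurable.aemeasurable
    apply Measurable.ennreal_ofReal
    exact (((Real.measurable_sin.comp (measurable_const.mul measurable_id)).pow_const 2).div
      (measurable_id.pow_const 2))
  have h0 := aux_ae_tendsto (fun n x => ENNReal.ofReal (Real.sin (τ n * x) ^ 2 / x ^ 2))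
    (fun n => hmeas _) (fun n => (hτ0 n).le)
  have h1 := aux_ae_tendsto (fun n x => ENNReal.ofReal (Real.sin ((τ n + 1) * x) ^ 2 / x ^ 2))
    (fun n => hmeas _) (fun n => (hτ1 n).le)
  have h2 := aux_ae_tendsto
    (fun n x => ENNReal.ofReal (Real.sin ((τ n + Real.sqrt 2) * x) ^ 2 / x ^ 2))
    (fun n => hmeas _) (fun n => (hτ2 n).le)
  have hmem : ∀ᵐ x ∂ν, x ∈ ({0}ᶜ : Set ℝ) :=
    ae_restrict_mem (measurableSet_singleton 0).compl
  have hfalse : ∀ᵐ x ∂ν, False := by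
    filter_upwards [h0, h1, h2, hmem] with x hx0 hx1 hx2 hxne
    have hxne' : x ≠ 0 := hxne
    have hx2pos : (0:ℝ) < x ^ 2 := by positivity
    -- convert ENNReal tendsto to real tendsto of sin² sequences
    have toreal : ∀ (s : ℕ → ℝ),
        Tendsto (fun n => ENNReal.ofReal (Real.sin (s n * x) ^ 2 / x ^ 2)) atTop (nhds 0) →
        Tendsto (fun n => Real.sin (s n * x) ^ 2) atTop (nhds 0) := by
      intro s hs
      have h1 := (ENNReal.tendsto_toReal (by simp)).comp hs
      have heq : (fun n => (ENNReal.ofReal (Real.sin (s n * x) ^ 2 / x ^ 2)).toReal)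
          = fun n => Real.sin (s n * x) ^ 2 / x ^ 2 := by
        funext n
        rw [ENNReal.toReal_ofReal (by positivity)]
      rw [Function.comp_def, heq] at h1
      simp only [ENNReal.toReal_zero] at h1
      have := h1.mul_const (x ^ 2)
      simp only [zero_mul] at this
      convert this using 2 with n
      field_simp
    have t0 := toreal _ hx0
    have t1 := toreal _ hx1
    have t2 := toreal _ hx2
    -- reshape: (τ n + c) * x = τ n * x + c * x
    have e1 : (fun n => Real.sin ((τ n + 1) * x) ^ 2)
        = fun n => Real.sin (τ n * x + 1 * x) ^ 2 := by funext n; ring_nf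
    have e2 : (fun n => Real.sin ((τ n + Real.sqrt 2) * x) ^ 2)
        = fun n => Real.sin (τ n * x + Real.sqrt 2 * x) ^ 2 := by funext n; ring_nf
    rw [e1] at t1; rw [e2] at t2
    have hsx : Real.sin (1 * x) = 0 := aux_sin_eq_zero _ _ t0 t1
    have hs2x : Real.sin (Real.sqrt 2 * x) = 0 := aux_sin_eq_zero _ _ t0 t2
    rw [one_mul] at hsx
    obtain ⟨k, hk⟩ := Real.sin_eq_zero_iff.mp hsx
    obtain ⟨m, hm⟩ := Real.sin_eq_zero_iff.mp hs2x
    have hpi : Real.pi ≠ 0 := Real.pi_ne_zero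
    have hk0 : (k : ℝ) ≠ 0 := by
      intro hk0
      rw [hk0, zero_mul] at hk
      exact hxne' hk.symm
    have : Real.sqrt 2 * ((k : ℝ) * Real.pi) = (m : ℝ) * Real.pi := by rw [hk, hm]
    have h2' : Real.sqrt 2 * (k : ℝ) = (m : ℝ) :=
      mul_right_cancel₀ hpi (by rw [mul_assoc]; exact this)
    have hrat : Real.sqrt 2 = (m : ℝ) / (k : ℝ) := by
      rw [eq_div_iff hk0]; exact h2'
    exact irrational_sqrt_two ⟨(m : ℚ) / (k : ℚ), by push_cast; rw [hrat]⟩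
  have : ν Set.univ = 0 := by
    have := hfalse
    rw [ae_iff] at this
    simpa using this
  rw [hν, Measure.restrict_apply_univ] at this
  exact this
end
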